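/- Let n ≥ 2 and let K : {(x,y) ∈ ℝⁿ×ℝⁿ : x ≠ y} → ℂ be measurable with |K(x,y)| ≤ C_K|x−y|^{1−n} for all x ≠ y. Then for every Schwartz function f on ℝⁿ, the integral Tf(x) = ∫_{ℝⁿ} K(x,y) f(y) dy converges absolutely for every x ∈ ℝⁿ, and Tf belongs to L^{2n}(ℝⁿ), i.e. ∫_{ℝⁿ} |Tf(x)|^{2n} dx < ∞. -/

import Mathlib

open MeasureTheory Metric Set
open scoped ENNReal

lemma aux_ball_int (n : ℕ) (hn : 2 ≤ n) :
    IntegrableOn (fun z : EuclideanSpace ℝ (Fin n) => ‖z‖ ^ ((1:ℝ) - n))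
      (ball (0 : EuclideanSpace ℝ (Fin n)) 1) volume := by
  set E := EuclideanSpace ℝ (Fin n)
  set r : ℝ := (1:ℝ) - n with hr
  have hrneg : r < 0 := by
    simp only [hr, sub_neg]
    exact_mod_cast lt_of_lt_of_le one_lt_two hn
  have hmeas : Measurable fun z : E => ‖z‖ ^ r := by fun_prop
  refine ⟨hmeas.aestronglyMeasurable.restrict, ?_⟩
  have hnn : ∀ z : E, 0 ≤ ‖z‖ ^ r := fun z => Real.rpow_nonneg (norm_nonneg z) r
  rw [HasFiniteIntegral]
  have h1 : (∫⁻ z in ball (0:E) 1, (‖(‖z‖ ^ r)‖₊ : ℝ≥0∞)) =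
      ∫⁻ z in ball (0:E) 1, ENNReal.ofReal (‖z‖ ^ r) := by
    refine lintegral_congr fun z => ?_
    rw [← enorm_eq_nnnorm, ← ofReal_norm, Real.norm_of_nonneg (hnn z)]
  rw [show (∫⁻ a in ball (0:E) 1, ‖‖a‖ ^ r‖ₑ) = _ from h1]
  set μ : Measure E := volume.restrict (ball (0:E) 1) with hμ
  rw [show (∫⁻ z in ball (0:E) 1, ENNReal.ofReal (‖z‖ ^ r)) =
      ∫⁻ z, ENNReal.ofReal (‖z‖ ^ r) ∂μ from rfl]
  rw [lintegral_eq_lintegral_meas_le μ (Filter.Eventually.of_forall hnn) hmeas.aemeasurable]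
  set mB : ℝ≥0∞ := volume (ball (0:E) 1) with hmB
  have hmBfin : mB < ∞ := measure_ball_lt_top
  have hsub : ∀ t : ℝ, 1 < t →
      {a : E | t ≤ ‖a‖ ^ r} ⊆ closedBall (0:E) (t ^ r⁻¹) := by
    intro t ht a ha
    simp only [mem_setOf_eq] at ha
    have hat : (0:ℝ) < t := lt_trans one_pos ht
    have hapos : 0 < ‖a‖ := by
      rcases eq_or_lt_of_le (norm_nonneg a) with h | h
      · exfalso
        rw [← h, Real.zero_rpow hrneg.ne] at ha
        linarith
      · exact h
    rw [mem_closedBall_zero_iff]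
    exact (Real.le_rpow_inv_iff_of_neg hapos hat hrneg).2 ha
  calc ∫⁻ t in Ioi (0:ℝ), μ {a | t ≤ ‖a‖ ^ r}
      ≤ ∫⁻ t in Ioc (0:ℝ) 1 ∪ Ioi 1, μ {a | t ≤ ‖a‖ ^ r} :=
        lintegral_mono_set Ioi_subset_Ioc_union_Ioi
    _ ≤ (∫⁻ t in Ioc (0:ℝ) 1, μ {a | t ≤ ‖a‖ ^ r}) + ∫⁻ t in Ioi 1, μ {a | t ≤ ‖a‖ ^ r} :=
        lintegral_union_le _ _ _
    _ < ∞ := by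
        refine ENNReal.add_lt_top.2 ⟨?_, ?_⟩
        · refine lt_of_le_of_lt
            (lintegral_mono (g := fun _ => μ univ) fun t => measure_mono (subset_univ _)) ?_
          · rw [setLIntegral_const]
            refine ENNReal.mul_lt_top ?_ (by simp [Real.volume_Ioc])
            simpa [hμ, Measure.restrict_apply_univ] using hmBfin
        · have hbound : ∀ t ∈ Ioi (1:ℝ),
              μ {a : E | t ≤ ‖a‖ ^ r} ≤ ENNReal.ofReal (t ^ (r⁻¹ * n)) * mB := by
            intro t ht
            have hat : (0:ℝ) < t := lt_trans one_pos ht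
            calc μ {a : E | t ≤ ‖a‖ ^ r} ≤ volume (closedBall (0:E) (t ^ r⁻¹)) := by
                  refine le_trans (le_trans (measure_mono (hsub t ht)) ?_) le_rfl
                  simp [hμ, Measure.restrict_apply_le]
              _ = ENNReal.ofReal ((t ^ r⁻¹) ^ Module.finrank ℝ E) * mB := by
                  rw [Measure.addHaar_closedBall _ _ (Real.rpow_nonneg hat.le _)]
              _ = ENNReal.ofReal (t ^ (r⁻¹ * n)) * mB := by
                  congr 1
                  rw [← Real.rpow_natCast (t ^ r⁻¹) _, ← Real.rpow_mul hat.le]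
                  congr 2
                  simp [E, finrank_euclideanSpace, hr]
          refine lt_of_le_of_lt (setLIntegral_mono' measurableSet_Ioi hbound) ?_
          rw [lintegral_mul_const' _ _ hmBfin.ne]
          refine ENNReal.mul_lt_top ?_ hmBfin
          refine IntegrableOn.setLIntegral_lt_top ?_
          refine integrableOn_Ioi_rpow_of_lt ?_ one_pos
          have hneg : (1:ℝ) - n < 0 := by rw [← hr]; exact hrneg
          rw [← div_eq_inv_mul, div_lt_iff_of_neg hneg]
          push_cast; linarith

lemma rpow_helper {s a b : ℝ} (hs : 0 ≤ s) (ha : 0 < a) (hb : 0 < b) (h : a ≤ 2 * b) :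
    b ^ (-s) ≤ 2 ^ s * a ^ (-s) := by
  have h2 : (2:ℝ) ^ s * a ^ (-s) = (a / 2) ^ (-s) := by
    rw [Real.div_rpow ha.le (by norm_num : (0:ℝ) ≤ 2), Real.rpow_neg ha.le,
      Real.rpow_neg (by norm_num : (0:ℝ) ≤ 2)]
    field_simp
  rw [h2]
  exact Real.rpow_le_rpow_of_nonpos (by positivity) (by linarith) (by linarith)

/-- for a weakly singular kernel of order `-1` and a Schwartz function `f`,
`Tf(x) = ∫ K(x,y) f(y) dy` converges absolutely for every `x` and `Tf ∈ L^{2n}`. -/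
theorem stmt10 (n : ℕ) (hn : 2 ≤ n) (CK : ℝ)
    (K : EuclideanSpace ℝ (Fin n) → EuclideanSpace ℝ (Fin n) → ℂ)
    (hKmeas : Measurable
      (fun p : EuclideanSpace ℝ (Fin n) × EuclideanSpace ℝ (Fin n) => K p.1 p.2))
    (hKsize : ∀ x y, x ≠ y → ‖K x y‖ ≤ CK * ‖x - y‖ ^ ((1:ℝ) - n))
    (f : SchwartzMap (EuclideanSpace ℝ (Fin n)) ℂ) :
    (∀ x : EuclideanSpace ℝ (Fin n), Integrable (fun y => K x y * f y)) ∧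
    (∫⁻ x : EuclideanSpace ℝ (Fin n),
        (‖∫ y, K x y * f y‖₊ : ℝ≥0∞) ^ (2 * n)) < ⊤ := by
  set r : ℝ := (1:ℝ) - n with hr
  have hn1 : (2:ℝ) ≤ n := by exact_mod_cast hn
  have hrneg : r < 0 := by rw [hr]; linarith
  haveI : Nontrivial (EuclideanSpace ℝ (Fin n)) := by
    refine ⟨⟨0, EuclideanSpace.single (⟨0, by omega⟩ : Fin n) (1:ℝ), fun h => ?_⟩⟩
    have h1 : (EuclideanSpace.single (⟨0, by omega⟩ : Fin n) (1:ℝ)) ⟨0, by omega⟩ = 1 := by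
      simp [EuclideanSpace.single_apply]
    rw [← h] at h1
    exact zero_ne_one h1
  -- Schwartz decay
  obtain ⟨C₁, hC₁0, hC₁⟩ : ∃ C : ℝ, 0 ≤ C ∧
      ∀ y : EuclideanSpace ℝ (Fin n), ‖f y‖ ≤ C * (1 + ‖y‖) ^ (-(2 * n : ℝ)) := by
    refine ⟨2 ^ (2*n) * (Finset.Iic ((2*n : ℕ), (0:ℕ))).sup
      (fun m => SchwartzMap.seminorm ℝ m.1 m.2) f, by positivity, fun y => ?_⟩
    have h := SchwartzMap.one_add_le_sup_seminorm_apply (𝕜 := ℝ)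
      (m := ((2*n : ℕ), (0:ℕ))) (k := 2*n) (n := 0) le_rfl le_rfl f y
    rw [norm_iteratedFDeriv_zero] at h
    have hpos : (0:ℝ) < 1 + ‖y‖ := by positivity
    have hppos : (0:ℝ) < (1 + ‖y‖) ^ (2*n : ℕ) := by positivity
    rw [show (-(2 * n:ℝ)) = -((2*n:ℕ):ℝ) by push_cast; ring, Real.rpow_neg hpos.le,
      Real.rpow_natCast, ← div_eq_mul_inv, le_div_iff₀ hppos]
    calc ‖f y‖ * (1 + ‖y‖) ^ (2*n : ℕ) = (1 + ‖y‖) ^ (2*n : ℕ) * ‖f y‖ := mul_comm _ _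
      _ ≤ _ := h
  -- main body
  set g0 : EuclideanSpace ℝ (Fin n) → ℝ := Set.indicator (ball (0:EuclideanSpace ℝ (Fin n)) 1) (fun z => ‖z‖ ^ r) with hg0
  have hg0int : Integrable g0 :=
    (integrable_indicator_iff measurableSet_ball).2 (aux_ball_int n hn)
  have hg0nn : ∀ z, 0 ≤ g0 z := fun z =>
    Set.indicator_nonneg (fun z _ => Real.rpow_nonneg (norm_nonneg z) r) z
  set I₁ : ℝ := ∫ z, g0 z with hI₁
  have hI₁nn : 0 ≤ I₁ := integral_nonneg hg0nn
  have hg0x : ∀ x : EuclideanSpace ℝ (Fin n), Integrable (fun y : EuclideanSpace ℝ (Fin n) => g0 (y - x)) := fun x =>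
    hg0int.comp_sub_right x
  have hIx : ∀ x : EuclideanSpace ℝ (Fin n), (∫ y, g0 (y - x)) = I₁ := fun x =>
    integral_sub_right_eq_self g0 x
  set w : EuclideanSpace ℝ (Fin n) → ℝ := fun y => (1 + ‖y‖) ^ (-((n:ℝ)+1)) with hw
  have hwint : Integrable w := by
    refine integrable_one_add_norm ?_
    rw [finrank_euclideanSpace_fin]
    linarith
  have hwnn : ∀ y : EuclideanSpace ℝ (Fin n), 0 ≤ w y := fun y => Real.rpow_nonneg (by positivity) _
  set I₂ : ℝ := ∫ y, w y with hI₂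
  have hI₂nn : 0 ≤ I₂ := integral_nonneg hwnn
  have hfint : Integrable (fun y : EuclideanSpace ℝ (Fin n) => ‖f y‖) := f.integrable.norm
  set I₃ : ℝ := ∫ y : EuclideanSpace ℝ (Fin n), ‖f y‖ with hI₃
  have hI₃nn : 0 ≤ I₃ := integral_nonneg (fun y => norm_nonneg _)
  set A : EuclideanSpace ℝ (Fin n) → ℝ := fun x => C₁ * 2 ^ (2*(n:ℝ)) * (1 + ‖x‖) ^ (-(2*(n:ℝ))) with hA
  set B : EuclideanSpace ℝ (Fin n) → ℝ := fun x => C₁ * 2 ^ ((n:ℝ)-1) * (1 + ‖x‖) ^ r with hB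
  set Ebd : EuclideanSpace ℝ (Fin n) → ℝ := fun x => 2 ^ ((n:ℝ)-1) * (1 + ‖x‖) ^ r with hEbd
  have hAnn : ∀ x, 0 ≤ A x := fun x => by positivity
  have hBnn : ∀ x, 0 ≤ B x := fun x => by positivity
  have hEnn : ∀ x, 0 ≤ Ebd x := fun x => by positivity
  set h : EuclideanSpace ℝ (Fin n) → EuclideanSpace ℝ (Fin n) → ℝ := fun x y => A x * g0 (y - x) + (B x * w y + Ebd x * ‖f y‖) with hh
  -- key pointwise estimate
  have hkey : ∀ x y : EuclideanSpace ℝ (Fin n), ‖x - y‖ ^ r * ‖f y‖ ≤ h x y := by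
    intro x y
    simp only [hh]
    have ha : (0:ℝ) < 1 + ‖x‖ := by positivity
    have hb : (0:ℝ) < 1 + ‖y‖ := by positivity
    have hfy : (0:ℝ) ≤ ‖f y‖ := norm_nonneg _
    have hterm1 : 0 ≤ A x * g0 (y - x) := mul_nonneg (hAnn x) (hg0nn _)
    have hterm2 : 0 ≤ B x * w y := mul_nonneg (hBnn x) (hwnn y)
    have hterm3 : 0 ≤ Ebd x * ‖f y‖ := mul_nonneg (hEnn x) hfy
    by_cases hyb : ‖y - x‖ < 1
    · have hmem : y - x ∈ ball (0:EuclideanSpace ℝ (Fin n)) 1 := mem_ball_zero_iff.2 hyb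
      have hg0v : g0 (y - x) = ‖y - x‖ ^ r := Set.indicator_of_mem hmem _
      have hab : 1 + ‖x‖ ≤ 2 * (1 + ‖y‖) := by
        have := norm_sub_norm_le x y
        have h2 : ‖x - y‖ = ‖y - x‖ := norm_sub_rev x y
        nlinarith [norm_nonneg y]
      have hfA : ‖f y‖ ≤ A x := by
        refine le_trans (hC₁ y) ?_
        simp only [hA]
        have := rpow_helper (s := 2*(n:ℝ)) (by positivity) ha hb hab
        calc C₁ * (1 + ‖y‖) ^ (-(2 * (n:ℝ))) ≤
            C₁ * (2 ^ (2*(n:ℝ)) * (1 + ‖x‖) ^ (-(2*(n:ℝ)))) := by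
              exact mul_le_mul_of_nonneg_left this hC₁0
          _ = C₁ * 2 ^ (2*(n:ℝ)) * (1 + ‖x‖) ^ (-(2*(n:ℝ))) := by ring
      have : ‖x - y‖ ^ r * ‖f y‖ ≤ A x * g0 (y - x) := by
        rw [hg0v, norm_sub_rev x y, mul_comm (A x) _]
        exact mul_le_mul_of_nonneg_left hfA (Real.rpow_nonneg (norm_nonneg _) r)
      linarith
    · push_neg at hyb
      by_cases hcase : 1 + ‖x‖ ≤ 2 * (1 + ‖y‖)
      · -- middle term
        have h1 : (1:ℝ) ≤ ‖x - y‖ := by rw [norm_sub_rev x y]; exact hyb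
        have hk1 : ‖x - y‖ ^ r ≤ 1 := Real.rpow_le_one_of_one_le_of_nonpos h1 hrneg.le
        have hsplit : (1 + ‖y‖) ^ (-(2 * (n:ℝ))) =
            (1 + ‖y‖) ^ (-((n:ℝ)-1)) * (1 + ‖y‖) ^ (-((n:ℝ)+1)) := by
          rw [← Real.rpow_add hb]; ring_nf
        have hhelp := rpow_helper (s := (n:ℝ)-1) (by linarith) ha hb hcase
        have : ‖x - y‖ ^ r * ‖f y‖ ≤ B x * w y := by
          calc ‖x - y‖ ^ r * ‖f y‖ ≤ 1 * ‖f y‖ :=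
                mul_le_mul_of_nonneg_right hk1 hfy
            _ = ‖f y‖ := one_mul _
            _ ≤ C₁ * (1 + ‖y‖) ^ (-(2 * (n:ℝ))) := hC₁ y
            _ = C₁ * ((1 + ‖y‖) ^ (-((n:ℝ)-1)) * w y) := by rw [hsplit]
            _ ≤ C₁ * ((2 ^ ((n:ℝ)-1) * (1 + ‖x‖) ^ (-((n:ℝ)-1))) * w y) := by
                refine mul_le_mul_of_nonneg_left
                  (mul_le_mul_of_nonneg_right hhelp (hwnn y)) hC₁0
            _ = B x * w y := by
                simp only [hB]
                rw [show r = -((n:ℝ)-1) by rw [hr]; ring]; ring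
        linarith
      · -- far term
        push_neg at hcase
        have hxy2 : (1 + ‖x‖) / 2 ≤ ‖x - y‖ := by
          have := norm_sub_norm_le x y
          linarith [norm_nonneg (x - y), norm_sub_norm_le x y]
        have hk : ‖x - y‖ ^ r ≤ ((1 + ‖x‖)/2) ^ r :=
          Real.rpow_le_rpow_of_nonpos (by positivity) hxy2 hrneg.le
        have hda : ((1 + ‖x‖)/2) ^ r = 2 ^ ((n:ℝ)-1) * (1 + ‖x‖) ^ r := by
          rw [Real.div_rpow ha.le (by norm_num : (0:ℝ) ≤ 2), div_eq_mul_inv,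
            ← Real.rpow_neg (by norm_num : (0:ℝ) ≤ 2),
            show -r = (n:ℝ)-1 by rw [hr]; ring]
          ring
        have : ‖x - y‖ ^ r * ‖f y‖ ≤ Ebd x * ‖f y‖ := by
          refine mul_le_mul_of_nonneg_right ?_ hfy
          simp only [hEbd]
          rw [← hda]; exact hk
        linarith
  -- integrability of h x
  have hhx : ∀ x : EuclideanSpace ℝ (Fin n), Integrable (h x) := fun x =>
    (((hg0x x).const_mul (A x))).add
      (((hwint.const_mul (B x))).add ((hfint.const_mul (Ebd x))))
  have hhval : ∀ x : EuclideanSpace ℝ (Fin n), (∫ y, h x y) = A x * I₁ + (B x * I₂ + Ebd x * I₃) := by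
    intro x
    simp only [hh]
    have e1 : (∫ y : EuclideanSpace ℝ (Fin n),
          A x * g0 (y - x) + (B x * w y + Ebd x * ‖f y‖)) =
        (∫ y : EuclideanSpace ℝ (Fin n), A x * g0 (y - x)) +
          ∫ y : EuclideanSpace ℝ (Fin n), (B x * w y + Ebd x * ‖f y‖) :=
      integral_add ((hg0x x).const_mul (A x))
        ((hwint.const_mul (B x)).add (hfint.const_mul (Ebd x)))
    have e2 : (∫ y : EuclideanSpace ℝ (Fin n), (B x * w y + Ebd x * ‖f y‖)) =
        (∫ y : EuclideanSpace ℝ (Fin n), B x * w y) +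
          ∫ y : EuclideanSpace ℝ (Fin n), Ebd x * ‖f y‖ :=
      integral_add (hwint.const_mul (B x)) (hfint.const_mul (Ebd x))
    rw [e1, e2, integral_const_mul, integral_const_mul, integral_const_mul, hIx x]
  -- a.e. domination of the kernel integrand
  have hdom : ∀ x : EuclideanSpace ℝ (Fin n), ∀ᵐ y : EuclideanSpace ℝ (Fin n), ‖K x y * f y‖ ≤ |CK| * h x y := by
    intro x
    have hae : ∀ᵐ y : EuclideanSpace ℝ (Fin n), y ≠ x := by
      have h0 : ({x} : Set (EuclideanSpace ℝ (Fin n)))ᶜ ∈ ae (volume : Measure (EuclideanSpace ℝ (Fin n))) :=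
        compl_mem_ae_iff.mpr (measure_singleton x)
      exact h0
    filter_upwards [hae] with y hy
    rw [norm_mul]
    calc ‖K x y‖ * ‖f y‖ ≤ (CK * ‖x - y‖ ^ r) * ‖f y‖ :=
          mul_le_mul_of_nonneg_right (hKsize x y hy.symm) (norm_nonneg _)
      _ ≤ (|CK| * ‖x - y‖ ^ r) * ‖f y‖ := by
          refine mul_le_mul_of_nonneg_right
            (mul_le_mul_of_nonneg_right (le_abs_self CK)
              (Real.rpow_nonneg (norm_nonneg _) r)) (norm_nonneg _)
      _ = |CK| * (‖x - y‖ ^ r * ‖f y‖) := by ring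
      _ ≤ |CK| * h x y := mul_le_mul_of_nonneg_left (hkey x y) (abs_nonneg CK)
  have hmK : ∀ x : EuclideanSpace ℝ (Fin n), AEStronglyMeasurable (fun y => K x y * f y) volume := fun x =>
    ((hKmeas.comp measurable_prodMk_left).mul f.continuous.measurable).aestronglyMeasurable
  have hint : ∀ x : EuclideanSpace ℝ (Fin n), Integrable (fun y => K x y * f y) := fun x =>
    Integrable.mono' ((hhx x).const_mul |CK|) (hmK x) (hdom x)
  refine ⟨hint, ?_⟩
  -- pointwise bound on T f
  set Cfin : ℝ := |CK| * (C₁ * 2 ^ (2*(n:ℝ)) * I₁ +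
      (C₁ * 2 ^ ((n:ℝ)-1) * I₂ + 2 ^ ((n:ℝ)-1) * I₃)) with hCfin
  have hCfin0 : 0 ≤ Cfin := by positivity
  have hTbd : ∀ x : EuclideanSpace ℝ (Fin n), ‖∫ y, K x y * f y‖ ≤ Cfin * (1 + ‖x‖) ^ r := by
    intro x
    have ha : (0:ℝ) < 1 + ‖x‖ := by positivity
    have ha1 : (1:ℝ) ≤ 1 + ‖x‖ := by linarith [norm_nonneg x]
    have hstep := norm_integral_le_of_norm_le ((hhx x).const_mul |CK|) (hdom x)
    rw [integral_const_mul, hhval x] at hstep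
    refine le_trans hstep ?_
    simp only [hCfin]
    have h2n : (1 + ‖x‖) ^ (-(2*(n:ℝ))) ≤ (1 + ‖x‖) ^ r :=
      Real.rpow_le_rpow_of_exponent_le ha1 (by rw [hr]; linarith)
    have hAle : A x * I₁ ≤ C₁ * 2 ^ (2*(n:ℝ)) * I₁ * (1 + ‖x‖) ^ r := by
      simp only [hA]
      calc C₁ * 2 ^ (2*(n:ℝ)) * (1 + ‖x‖) ^ (-(2*(n:ℝ))) * I₁
          ≤ C₁ * 2 ^ (2*(n:ℝ)) * (1 + ‖x‖) ^ r * I₁ := by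
            refine mul_le_mul_of_nonneg_right
              (mul_le_mul_of_nonneg_left h2n (by positivity)) hI₁nn
        _ = C₁ * 2 ^ (2*(n:ℝ)) * I₁ * (1 + ‖x‖) ^ r := by ring
    have hBle : B x * I₂ = C₁ * 2 ^ ((n:ℝ)-1) * I₂ * (1 + ‖x‖) ^ r := by
      simp only [hB]; ring
    have hEle : Ebd x * I₃ = 2 ^ ((n:ℝ)-1) * I₃ * (1 + ‖x‖) ^ r := by
      simp only [hEbd]; ring
    calc |CK| * (A x * I₁ + (B x * I₂ + Ebd x * I₃))
        ≤ |CK| * ((C₁ * 2 ^ (2*(n:ℝ)) * I₁ + (C₁ * 2 ^ ((n:ℝ)-1) * I₂ +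
            2 ^ ((n:ℝ)-1) * I₃)) * (1 + ‖x‖) ^ r) := by
          refine mul_le_mul_of_nonneg_left ?_ (abs_nonneg CK)
          calc A x * I₁ + (B x * I₂ + Ebd x * I₃)
              ≤ C₁ * 2 ^ (2*(n:ℝ)) * I₁ * (1 + ‖x‖) ^ r +
                (C₁ * 2 ^ ((n:ℝ)-1) * I₂ * (1 + ‖x‖) ^ r +
                  2 ^ ((n:ℝ)-1) * I₃ * (1 + ‖x‖) ^ r) :=
                add_le_add hAle (by rw [hBle, hEle])
            _ = _ := by ring
      _ = _ := by ring
  -- conclude with the finite integral of (1+|x|)^(-s)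
  set s : ℝ := 2*(n:ℝ)*((n:ℝ)-1) with hs
  have hfin : (∫⁻ x : EuclideanSpace ℝ (Fin n), ENNReal.ofReal ((1 + ‖x‖) ^ (-s))) < ⊤ := by
    refine finite_integral_one_add_norm ?_
    rw [finrank_euclideanSpace_fin, hs]
    nlinarith
  have hmono : ∀ x : EuclideanSpace ℝ (Fin n), (‖∫ y, K x y * f y‖₊ : ℝ≥0∞) ^ (2*n) ≤
      ENNReal.ofReal (Cfin ^ (2*n)) * ENNReal.ofReal ((1 + ‖x‖) ^ (-s)) := by
    intro x
    have ha : (0:ℝ) ≤ 1 + ‖x‖ := by positivity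
    have hb1 : ((1 + ‖x‖) ^ r) ^ (2*n) = (1 + ‖x‖) ^ (-s) := by
      rw [← Real.rpow_natCast ((1 + ‖x‖) ^ r) (2*n), ← Real.rpow_mul ha]
      congr 1
      rw [hr, hs]
      push_cast
      ring
    calc (‖∫ y, K x y * f y‖₊ : ℝ≥0∞) ^ (2*n)
        = ENNReal.ofReal (‖∫ y, K x y * f y‖ ^ (2*n)) := by
          rw [ENNReal.ofReal_pow (norm_nonneg _), ofReal_norm, enorm_eq_nnnorm]
      _ ≤ ENNReal.ofReal ((Cfin * (1 + ‖x‖) ^ r) ^ (2*n)) := by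
          exact ENNReal.ofReal_le_ofReal
            (pow_le_pow_left₀ (norm_nonneg _) (hTbd x) (2*n))
      _ = ENNReal.ofReal (Cfin ^ (2*n)) * ENNReal.ofReal ((1 + ‖x‖) ^ (-s)) := by
          rw [mul_pow, hb1, ENNReal.ofReal_mul (by positivity)]
  calc (∫⁻ x : EuclideanSpace ℝ (Fin n), (‖∫ y, K x y * f y‖₊ : ℝ≥0∞) ^ (2*n))
      ≤ ∫⁻ x : EuclideanSpace ℝ (Fin n), ENNReal.ofReal (Cfin ^ (2*n)) * ENNReal.ofReal ((1 + ‖x‖) ^ (-s)) :=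
        lintegral_mono hmono
    _ = ENNReal.ofReal (Cfin ^ (2*n)) * ∫⁻ x : EuclideanSpace ℝ (Fin n), ENNReal.ofReal ((1 + ‖x‖) ^ (-s)) :=
        lintegral_const_mul' _ _ ENNReal.ofReal_ne_top
    _ < ⊤ := ENNReal.mul_lt_top ENNReal.ofReal_lt_top hfin
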